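/- For every natural number N ≥ 1, the following identity of rational functions in q holds: (1/(1-q)) (1 − (q^2;q^2)_N/(q^3;q^2)_N) = ∑_{n=1}^{N} [N choose n]_{q^2} (-1)^{n-1} q^{n(n+1)}/(1-q^{2n+1}). -/

import Mathlib

open Finset

/-- q-Pochhammer symbol (a;q)_n = ∏_{k=0}^{n-1} (1 - a q^k). -/
noncomputable def qP (a q : ℂ) (n : ℕ) : ℂ := ∏ k ∈ Finset.range n, (1 - a * q ^ k)

/-- Gaussian (q-)binomial coefficient [N choose n]_q. -/
noncomputable def qBinom (q : ℂ) (N n : ℕ) : ℂ := qP q q N / (qP q q n * qP q q (N - n))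

/-!
Write `t = q²`. The sum `S_N(z) = ∑_{k=0}^N [N choose k]_t (-1)^k q^{k(k+1)} / (1 - z t^k)`
is the partial-fraction expansion of `(t;t)_N / (z;t)_{N+1}`: the q-Pascal rule gives
`S_{N+1}(z) = S_N(z) - t^{N+1} S_N(z t)`, a recursion the closed form satisfies as well.
The theorem is the case `z = q`, after moving the `k = 0` term `1 / (1 - q)` to the other side.
-/

lemma qP_zero (a q : ℂ) : qP a q 0 = 1 := prod_range_zero _

lemma qP_succ (a q : ℂ) (n : ℕ) : qP a q (n + 1) = qP a q n * (1 - a * q ^ n) :=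
  prod_range_succ _ n

lemma qP_succ' (a q : ℂ) (n : ℕ) : qP a q (n + 1) = (1 - a) * qP (a * q) q n := by
  simp only [qP, prod_range_succ', pow_zero, mul_one, pow_succ, mul_assoc, mul_comm q]
  ring

lemma qP_ne_zero_of_norm_lt_one {a q : ℂ} (ha : ‖a‖ < 1) (hq : ‖q‖ ≤ 1) (n : ℕ) :
    qP a q n ≠ 0 := by
  refine prod_ne_zero_iff.mpr fun k _ h => ?_
  have : ‖a * q ^ k‖ < 1 := by
    rw [norm_mul, norm_pow]
    exact mul_lt_one_of_nonneg_of_lt_one_left (norm_nonneg a) ha (pow_le_one₀ (norm_nonneg q) hq)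
  rw [(sub_eq_zero.mp h).symm, norm_one] at this
  exact lt_irrefl _ this

section GaussianBinomial

variable {t : ℂ} (ht : ∀ n, qP t t n ≠ 0)
include ht

lemma qBinom_zero_right (N : ℕ) : qBinom t N 0 = 1 := by
  rw [qBinom, qP_zero, one_mul, Nat.sub_zero, div_self (ht N)]

lemma qBinom_self (N : ℕ) : qBinom t N N = 1 := by
  rw [qBinom, Nat.sub_self, qP_zero, mul_one, div_self (ht N)]

lemma qBinom_succ_succ {N k : ℕ} (hk : k < N) :
    qBinom t (N + 1) (k + 1) = qBinom t N (k + 1) + t ^ (N - k) * qBinom t N k := by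
  obtain ⟨j, rfl⟩ := Nat.exists_eq_add_of_lt hk
  simp only [qBinom, show k + j + 1 - k = j + 1 by omega,
    show k + j + 1 + 1 - (k + 1) = j + 1 by omega, show k + j + 1 - (k + 1) = j by omega]
  have hk1 := right_ne_zero_of_mul (qP_succ t t k ▸ ht (k + 1))
  have hj1 := right_ne_zero_of_mul (qP_succ t t j ▸ ht (j + 1))
  have hkj := ht (k + j + 1)
  have hj := ht j
  have hk := ht k
  rw [qP_succ t _ (k + j + 1), qP_succ t t j, qP_succ t t k]
  field_simp
  ring

lemma sum_qBinom_succ_mul (a : ℕ → ℂ) (N : ℕ) :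
    ∑ k ∈ range (N + 2), qBinom t (N + 1) k * a k =
      ∑ k ∈ range (N + 1), qBinom t N k * a k +
        ∑ k ∈ range (N + 1), t ^ (N - k) * qBinom t N k * a (k + 1) := by
  rw [sum_range_succ', sum_range_succ, sum_range_succ' (fun k => qBinom t N k * a k),
    sum_range_succ (fun k => t ^ (N - k) * qBinom t N k * a (k + 1))]
  have hpascal : ∀ k ∈ range N, qBinom t (N + 1) (k + 1) * a (k + 1) =
      qBinom t N (k + 1) * a (k + 1) + t ^ (N - k) * qBinom t N k * a (k + 1) := fun k hk => by
    rw [qBinom_succ_succ ht (mem_range.mp hk)]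
    ring
  rw [sum_congr rfl hpascal, sum_add_distrib, qBinom_zero_right ht, qBinom_zero_right ht,
    qBinom_self ht, qBinom_self ht, Nat.sub_self]
  ring

end GaussianBinomial

noncomputable def partialFractionTerm (q z : ℂ) (k : ℕ) : ℂ :=
  (-1) ^ k * q ^ (k * (k + 1)) / (1 - z * (q ^ 2) ^ k)

noncomputable def partialFractionSum (q z : ℂ) (N : ℕ) : ℂ :=
  ∑ k ∈ range (N + 1), qBinom (q ^ 2) N k * partialFractionTerm q z k

lemma partialFractionTerm_succ (q z : ℂ) (k : ℕ) :
    partialFractionTerm q z (k + 1) =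
      -(q ^ 2) ^ (k + 1) * partialFractionTerm q (z * q ^ 2) k := by
  simp only [partialFractionTerm, ← pow_mul,
    show (k + 1) * (k + 1 + 1) = k * (k + 1) + 2 * (k + 1) by ring]
  ring

lemma partialFractionTerm_self {q : ℂ} {n : ℕ} (hn : 1 ≤ n) :
    partialFractionTerm q q n = -((-1) ^ (n - 1) * q ^ (n * (n + 1)) / (1 - q ^ (2 * n + 1))) := by
  obtain ⟨m, rfl⟩ := Nat.exists_eq_add_of_le' hn
  simp only [partialFractionTerm, Nat.add_sub_cancel, pow_succ, pow_mul]
  ring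

lemma partialFractionSum_succ {q : ℂ} (ht : ∀ n, qP (q ^ 2) (q ^ 2) n ≠ 0) (z : ℂ)
    (N : ℕ) :
    partialFractionSum q z (N + 1) =
      partialFractionSum q z N - (q ^ 2) ^ (N + 1) * partialFractionSum q (z * q ^ 2) N := by
  simp only [partialFractionSum]
  rw [sum_qBinom_succ_mul ht, mul_sum, sub_eq_add_neg, ← sum_neg_distrib]
  congr 1
  refine sum_congr rfl fun k hk => ?_
  have hpow : (q ^ 2) ^ (N - k) * (q ^ 2) ^ (k + 1) = (q ^ 2) ^ (N + 1) := by
    have hkN := mem_range.mp hk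
    rw [← pow_add, show N - k + (k + 1) = N + 1 by omega]
  rw [partialFractionTerm_succ]
  linear_combination (-qBinom (q ^ 2) N k * partialFractionTerm q (z * q ^ 2) k) * hpow

theorem partialFractionSum_eq {q z : ℂ} (ht : ∀ n, qP (q ^ 2) (q ^ 2) n ≠ 0) (N : ℕ)
    (hz : qP z (q ^ 2) (N + 1) ≠ 0) :
    partialFractionSum q z N = qP (q ^ 2) (q ^ 2) N / qP z (q ^ 2) (N + 1) := by
  induction N generalizing z with
  | zero => simp [partialFractionSum, partialFractionTerm, qBinom, qP]
  | succ N ih =>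
    obtain ⟨hzN, hlast⟩ := mul_ne_zero_iff.mp (qP_succ z _ (N + 1) ▸ hz)
    obtain ⟨hz0, hzt⟩ := mul_ne_zero_iff.mp (qP_succ' z _ (N + 1) ▸ hz)
    rw [partialFractionSum_succ ht, ih hzN, ih hzt, qP_succ (q ^ 2) _ N]
    have hshift : qP (z * q ^ 2) (q ^ 2) (N + 1) =
        qP z (q ^ 2) (N + 1) * (1 - z * (q ^ 2) ^ (N + 1)) / (1 - z) := by
      rw [eq_div_iff hz0, ← qP_succ, qP_succ' z, mul_comm]
    rw [hshift, qP_succ z _ (N + 1), ← pow_succ']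
    generalize (q ^ 2) ^ (N + 1) = x at hlast ⊢
    rw [mul_comm z x] at hlast ⊢
    field_simp
    ring

theorem stmt_19_general (N : ℕ) (q : ℂ) (hq : ‖q‖ < 1) :
    (1 / (1 - q)) * (1 - qP (q ^ 2) (q ^ 2) N / qP (q ^ 3) (q ^ 2) N) =
      ∑ n ∈ Finset.Icc 1 N,
        qBinom (q ^ 2) N n * ((-1) ^ (n - 1) * q ^ (n * (n + 1)) / (1 - q ^ (2 * n + 1))) := by
  have hq2 : ‖q ^ 2‖ < 1 := by
    rw [norm_pow]
    exact pow_lt_one₀ (norm_nonneg q) hq two_ne_zero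
  have ht n : qP (q ^ 2) (q ^ 2) n ≠ 0 := qP_ne_zero_of_norm_lt_one hq2 hq2.le n
  have hden : qP q (q ^ 2) (N + 1) = (1 - q) * qP (q ^ 3) (q ^ 2) N := by
    rw [qP_succ', ← pow_succ']
  have hz : qP q (q ^ 2) (N + 1) ≠ 0 := qP_ne_zero_of_norm_lt_one hq hq2.le _
  obtain ⟨hq1, hq3⟩ := mul_ne_zero_iff.mp (hden ▸ hz)
  have key := partialFractionSum_eq ht N hz
  rw [partialFractionSum, sum_range_eq_add_Ico _ (Nat.zero_lt_succ N), Nat.succ_eq_add_one,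
    Ico_add_one_right_eq_Icc, hden, qBinom_zero_right ht] at key
  have hterm0 : partialFractionTerm q q 0 = 1 / (1 - q) := by simp [partialFractionTerm]
  rw [hterm0, one_mul] at key
  have hterm : ∀ n ∈ Icc 1 N,
      qBinom (q ^ 2) N n * ((-1) ^ (n - 1) * q ^ (n * (n + 1)) / (1 - q ^ (2 * n + 1))) =
        -(qBinom (q ^ 2) N n * partialFractionTerm q q n) := fun n hn => by
    rw [partialFractionTerm_self (mem_Icc.mp hn).1, mul_neg, neg_neg]
  rw [sum_congr rfl hterm, sum_neg_distrib, eq_sub_of_add_eq' key]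
  field_simp
  ring

theorem stmt_19 (N : ℕ) (hN : 1 ≤ N) (q : ℂ) (hq : ‖q‖ < 1) :
    (1 / (1 - q)) * (1 - qP (q ^ 2) (q ^ 2) N / qP (q ^ 3) (q ^ 2) N) =
      ∑ n ∈ Finset.Icc 1 N,
        qBinom (q ^ 2) N n * ((-1) ^ (n - 1) * q ^ (n * (n + 1)) / (1 - q ^ (2 * n + 1))) :=
  stmt_19_general N q hq
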